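/- In V = F_4^5 there are exactly 135 simplex points and exactly 162 simplex lines. -/

import Mathlib

/-- A vector of `F^n` is *simplex* if exactly one of its coordinates is zero. -/
def SimplexVec {F : Type*} [Field F] [DecidableEq F] {n : ℕ} (x : Fin n → F) : Prop :=
  (Finset.univ.filter (fun i => x i = 0)).card = 1

/-- A *simplex point* is a 1-dimensional subspace spanned by a simplex vector. -/
def SimplexPoint {F : Type*} [Field F] [DecidableEq F] {n : ℕ}
    (P : Submodule F (Fin n → F)) : Prop :=
  ∃ x : Fin n → F, SimplexVec x ∧ P = Submodule.span F {x}

/-- A *simplex line* is a 2-dimensional subspace all of whose nonzero vectors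
are simplex. -/
def SimplexLine {F : Type*} [Field F] [DecidableEq F] {n : ℕ}
    (L : Submodule F (Fin n → F)) : Prop :=
  Module.finrank F ↥L = 2 ∧ ∀ x ∈ L, x ≠ 0 → SimplexVec x

/-!
A simplex vector of `F_q^n` is a choice of its zero coordinate and of units elsewhere, so there
are `n (q-1)^(n-1)` of them, and each simplex point contains exactly `q - 1` of them.

No nonzero vector of a simplex line vanishes at both coordinates `0` and `1`, so projecting onto
these two coordinates is an isomorphism and a simplex line has a unique basis `(0, 1, p)`,
`(1, 0, r)`. These two vectors have no further zeros, and for `a ≠ 0` the vector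
`(-a, 1, p - a r)` has exactly one; hence `p = c r` with `r` a tuple of units and
`c : Fin m ≃ F_qˣ` a bijection, and conversely every such pair gives a simplex line. So simplex
lines exist in `F_q^(m+2)` only for `m = q - 1`, and then there are `(q-1)^(q-1) (q-1)!` of them:
`27 · 6 = 162` for `q = 4`.
-/

open Module Submodule Matrix

theorem card_spanSingleton_mul_card_units {K V : Type*} [Field K] [AddCommGroup V] [Module K V]
    [Finite V] (S : V → Prop) (hS₀ : ∀ x, S x → x ≠ 0) (hS : ∀ (c : Kˣ) x, S x → S (c • x)) :
    Nat.card {P : Submodule K V // ∃ x, S x ∧ P = K ∙ x} * Nat.card Kˣ = Nat.card {x // S x} := by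
  let π : {x // S x} → {P : Submodule K V // ∃ x, S x ∧ P = K ∙ x} :=
    fun x => ⟨K ∙ x.1, x.1, x.2, rfl⟩
  have hfiber : ∀ P, Nat.card {x // π x = P} = Nat.card Kˣ := by
    rintro ⟨_, x, hx, rfl⟩
    refine (Nat.card_congr (Equiv.ofBijective
      (fun c : Kˣ => (⟨⟨c • x, hS c x hx⟩, Subtype.ext (span_singleton_group_smul_eq K c x)⟩ :
        {y // π y = ⟨K ∙ x, x, hx, rfl⟩})) ⟨fun c d hcd => ?_, fun ⟨y, hy⟩ => ?_⟩)).symm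
    · exact Units.ext (smul_left_injective K (hS₀ x hx) (congrArg (·.1.1) hcd))
    · obtain ⟨c, hc⟩ := span_singleton_eq_span_singleton.1 (congrArg Subtype.val hy).symm
      exact ⟨c, Subtype.ext (Subtype.ext hc)⟩
  have := Fintype.ofFinite {P : Submodule K V // ∃ x, S x ∧ P = K ∙ x}
  rw [← Nat.card_congr (Equiv.sigmaFiberEquiv π), Nat.card_sigma]
  simp [hfiber]

section

variable {F : Type*} [Field F]

def lineOf {m : ℕ} (p r : Fin m → F) : Submodule F (Fin (m + 2) → F) :=
  span F {vecCons 0 (vecCons 1 p), vecCons 1 (vecCons 0 r)}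

theorem mem_lineOf_iff {m : ℕ} {p r : Fin m → F} {x : Fin (m + 2) → F} :
    x ∈ lineOf p r ↔ ∃ s t : F, vecCons t (vecCons s (s • p + t • r)) = x := by
  simp [lineOf, mem_span_pair]

theorem lineOf_injective {m : ℕ} {p r p' r' : Fin m → F} (h : lineOf p r = lineOf p' r') :
    p = p' ∧ r = r' := by
  have hv : vecCons 0 (vecCons 1 p) ∈ lineOf p' r' := h ▸ subset_span (by simp)
  have hw : vecCons 1 (vecCons 0 r) ∈ lineOf p' r' := h ▸ subset_span (by simp)
  obtain ⟨s, t, hst⟩ := mem_lineOf_iff.1 hv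
  obtain ⟨s', t', hst'⟩ := mem_lineOf_iff.1 hw
  simp only [vecCons_inj] at hst hst'
  obtain ⟨rfl, rfl, rfl⟩ := hst
  obtain ⟨rfl, rfl, rfl⟩ := hst'
  simp

theorem finrank_lineOf {m : ℕ} (p r : Fin m → F) : finrank F (lineOf p r) = 2 := by
  have hli : LinearIndependent F ![vecCons (0 : F) (vecCons 1 p), vecCons 1 (vecCons 0 r)] := by
    refine LinearIndependent.pair_iff.2 fun s t hst => ?_
    have := congrFun hst 0
    have := congrFun hst 1
    simp_all
  rw [lineOf, ← range_cons_cons_empty, finrank_span_eq_card hli, Fintype.card_fin]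

theorem exists_lineOf_eq {m : ℕ} {L : Submodule F (Fin (m + 2) → F)} (hL : finrank F L = 2)
    (h₀₁ : ∀ x ∈ L, x 0 = 0 → x 1 = 0 → x = 0) : ∃ p r, lineOf p r = L := by
  let π : L →ₗ[F] F × F := ((LinearMap.proj 0).prod (LinearMap.proj 1)) ∘ₗ L.subtype
  have hπ_apply : ∀ x, π x = (x.1 0, x.1 1) := fun _ => rfl
  have hπ : Function.Surjective π := by
    refine (LinearMap.injective_iff_surjective_of_finrank_eq_finrank (by simp [hL])).1 ?_
    refine (injective_iff_map_eq_zero π).2 fun x hx => Subtype.ext ?_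
    rw [hπ_apply, Prod.mk_eq_zero] at hx
    exact h₀₁ x x.2 hx.1 hx.2
  obtain ⟨v, hv⟩ := hπ (0, 1)
  obtain ⟨w, hw⟩ := hπ (1, 0)
  rw [hπ_apply, Prod.mk.injEq] at hv hw
  have hcons : ∀ {a b : F} (x : Fin (m + 2) → F), x 0 = a → x 1 = b →
      vecCons a (vecCons b (vecTail (vecTail x))) = x := by
    rintro a b x rfl rfl
    conv_rhs => rw [← cons_head_tail x, ← cons_head_tail (vecTail x)]
    rfl
  refine ⟨vecTail (vecTail v), vecTail (vecTail w), eq_of_le_of_finrank_eq ?_ ?_⟩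
  · rw [lineOf, span_le, Set.insert_subset_iff, Set.singleton_subset_iff, hcons v hv.1 hv.2,
      hcons w hw.1 hw.2]
    exact ⟨v.2, w.2⟩
  · rw [finrank_lineOf, hL]

variable [DecidableEq F]

theorem simplexVec_iff_existsUnique {n : ℕ} {x : Fin n → F} :
    SimplexVec x ↔ ∃! i, x i = 0 := by
  simp [SimplexVec, Finset.card_eq_one_iff_existsUnique]

theorem card_existsUnique_eq_zero {ι : Type*} [Fintype ι] [DecidableEq ι] [Fintype F] :
    Nat.card {x : ι → F // ∃! i, x i = 0} =
      Fintype.card ι * (Fintype.card F - 1) ^ (Fintype.card ι - 1) := by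
  let g : (Σ i : ι, ({j // j ≠ i} → Fˣ)) → {x : ι → F // ∃! i, x i = 0} :=
    fun f => ⟨fun j => if h : j = f.1 then 0 else f.2 ⟨j, h⟩, f.1, by simp, fun j hj => by
      by_contra h; simp [h] at hj⟩
  have hg : g.Bijective := by
    constructor
    · rintro ⟨i, f⟩ ⟨i', f'⟩ hff'
      have hx := congrArg Subtype.val hff'
      obtain rfl : i = i' := by
        by_contra h
        exact (f' ⟨i, h⟩).ne_zero (by simpa [g, h] using (congrFun hx i).symm)
      simp only [Sigma.mk.injEq, heq_eq_eq, true_and]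
      funext ⟨j, hj⟩
      exact Units.ext (by simpa [g, hj] using congrFun hx j)
    · rintro ⟨x, i, hi, huniq⟩
      refine ⟨⟨i, fun j => Units.mk0 (x j) fun h => j.2 (huniq j h)⟩,
        Subtype.ext (funext fun j => ?_)⟩
      by_cases h : j = i
      · subst h; simp [g, hi]
      · simp [g, h]
  rw [← Nat.card_congr (Equiv.ofBijective g hg), Nat.card_eq_fintype_card]
  simp [Fintype.card_sigma, Fintype.card_pi, Fintype.card_units, Fintype.card_subtype_compl]

theorem SimplexVec.ne_zero {n : ℕ} (hn : 2 ≤ n) {x : Fin n → F} (hx : SimplexVec x) : x ≠ 0 := by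
  rintro rfl
  simp only [SimplexVec, Pi.zero_apply, Finset.filter_true, Finset.card_univ,
    Fintype.card_fin] at hx
  omega

theorem SimplexVec.units_smul {n : ℕ} {x : Fin n → F} (hx : SimplexVec x) (c : Fˣ) :
    SimplexVec (c • x) := by
  simpa [SimplexVec, Units.smul_def] using hx

theorem card_simplexPoint_mul [Fintype F] {n : ℕ} (hn : 2 ≤ n) :
    Nat.card {P : Submodule F (Fin n → F) // SimplexPoint P} * (Fintype.card F - 1) =
      n * (Fintype.card F - 1) ^ (n - 1) := by
  calc _ = Nat.card {x : Fin n → F // SimplexVec x} := by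
        rw [← Fintype.card_units, ← Nat.card_eq_fintype_card]
        exact card_spanSingleton_mul_card_units _ (fun _ => SimplexVec.ne_zero hn)
          (fun c _ hx => hx.units_smul c)
    _ = _ := by
        simp only [simplexVec_iff_existsUnique, card_existsUnique_eq_zero, Fintype.card_fin]

theorem simplexVec_vecCons_iff {n : ℕ} {a : F} {x : Fin n → F} :
    SimplexVec (vecCons a x) ↔ a = 0 ∧ (∀ i, x i ≠ 0) ∨ a ≠ 0 ∧ SimplexVec x := by
  rw [SimplexVec, Fin.card_filter_univ_succ]
  by_cases ha : a = 0 <;>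
    simp [ha, SimplexVec, Finset.card_eq_zero, Finset.filter_eq_empty_iff]

theorem simplexLine_lineOf_iff {m : ℕ} {p r : Fin m → F} :
    SimplexLine (lineOf p r) ↔
      (∀ k, p k ≠ 0) ∧ (∀ k, r k ≠ 0) ∧ ∀ a : Fˣ, ∃! k, p k = a * r k := by
  have hratio : ∀ s t : F, s ≠ 0 →
      (SimplexVec (s • p + t • r) ↔ ∃! k, p k = -t / s * r k) := by
    intro s t hs
    rw [simplexVec_iff_existsUnique]
    refine existsUnique_congr fun k => ?_
    simp only [Pi.add_apply, Pi.smul_apply, smul_eq_mul]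
    field_simp
    constructor <;> intro h <;> linear_combination h
  rw [SimplexLine, finrank_lineOf]
  constructor
  · rintro ⟨-, h⟩
    have h' : ∀ s t : F, (s ≠ 0 ∨ t ≠ 0) →
        SimplexVec (vecCons t (vecCons s (s • p + t • r))) := fun s t hst =>
      h _ (mem_lineOf_iff.2 ⟨s, t, rfl⟩) fun h₀ => by
        have := congrFun h₀ 0
        have := congrFun h₀ 1
        simp_all
    refine ⟨?_, ?_, fun a => ?_⟩
    · simpa [simplexVec_vecCons_iff, Fin.forall_fin_succ] using h' 1 0 (by simp)
    · simpa [simplexVec_vecCons_iff, Fin.forall_fin_succ] using h' 0 1 (by simp)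
    · have := h' 1 (-a) (by simp)
      simp only [simplexVec_vecCons_iff, neg_eq_zero, Units.ne_zero, one_ne_zero] at this
      simpa using (hratio 1 (-a) one_ne_zero).1 (by tauto)
  · rintro ⟨hp, hr, h⟩
    refine ⟨rfl, fun x hx hx₀ => ?_⟩
    obtain ⟨s, t, rfl⟩ := mem_lineOf_iff.1 hx
    rw [simplexVec_vecCons_iff, simplexVec_vecCons_iff]
    rcases eq_or_ne s 0 with rfl | hs
    · have ht : t ≠ 0 := by
        rintro rfl
        simp at hx₀
      simp [ht, hr]
    rcases eq_or_ne t 0 with rfl | ht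
    · simp [hs, hp, Fin.forall_fin_succ]
    · exact Or.inr ⟨ht, Or.inr ⟨hs, (hratio s t hs).2 (h (Units.mk0 (-t / s) (by simp [hs, ht])))⟩⟩

theorem SimplexLine.eq_zero_of_apply_zero_of_apply_one {m : ℕ}
    {L : Submodule F (Fin (m + 2) → F)} (hL : SimplexLine L) {x : Fin (m + 2) → F} (hx : x ∈ L)
    (h₀ : x 0 = 0) (h₁ : x 1 = 0) : x = 0 := by
  by_contra hx₀
  obtain ⟨i, -, hi⟩ := simplexVec_iff_existsUnique.1 (hL.2 x hx hx₀)
  exact absurd ((hi 0 h₀).trans (hi 1 h₁).symm) (by simp)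

theorem card_simplexLine_eq {m : ℕ} :
    Nat.card {L : Submodule F (Fin (m + 2) → F) // SimplexLine L} =
      Nat.card ((Fin m → Fˣ) × (Fin m ≃ Fˣ)) := by
  let Φ : (Fin m → Fˣ) × (Fin m ≃ Fˣ) → {L : Submodule F (Fin (m + 2) → F) // SimplexLine L} :=
    fun rc => ⟨lineOf (fun k => rc.2 k * rc.1 k) (fun k => rc.1 k),
      simplexLine_lineOf_iff.2 ⟨fun k => by simp, fun k => by simp, fun a =>
        ⟨rc.2.symm a, by simp, fun k hk => (Equiv.eq_symm_apply _).2
          (Units.ext (mul_right_cancel₀ (rc.1 k).ne_zero hk))⟩⟩⟩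
  refine (Nat.card_congr
    (Equiv.ofBijective Φ ⟨fun ⟨r, c⟩ ⟨r', c'⟩ h => ?_, fun ⟨L, hL⟩ => ?_⟩)).symm
  · obtain ⟨hcr, hr⟩ := lineOf_injective (congrArg Subtype.val h)
    have hr' : r = r' := funext fun k => Units.ext (congrFun hr k)
    subst hr'
    exact Prod.ext rfl (Equiv.ext fun k => Units.ext
      (mul_right_cancel₀ (r k).ne_zero (congrFun hcr k)))
  · obtain ⟨p, r, rfl⟩ := exists_lineOf_eq hL.1 fun x hx => hL.eq_zero_of_apply_zero_of_apply_one hx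
    obtain ⟨hp, hr, h⟩ := simplexLine_lineOf_iff.1 hL
    have hc : Function.Bijective fun k => Units.mk0 (p k / r k) (div_ne_zero (hp k) (hr k)) :=
      (Function.bijective_iff_existsUnique _).2 fun a => by
        simpa only [Units.ext_iff, Units.val_mk0, div_eq_iff (hr _)] using h a
    refine ⟨(fun k => Units.mk0 (r k) (hr k), Equiv.ofBijective _ hc), Subtype.ext ?_⟩
    simp [Φ, div_mul_cancel₀ _ (hr _)]

open Nat in
theorem card_simplexLine [Fintype F] {m : ℕ} (hm : Fintype.card F = m + 1) :
    Nat.card {L : Submodule F (Fin (m + 2) → F) // SimplexLine L} = m ^ m * m ! := by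
  have hunits : Fintype.card Fˣ = m := by simp [Fintype.card_units, hm]
  rw [card_simplexLine_eq, Nat.card_eq_fintype_card, Fintype.card_prod, Fintype.card_fun,
    Fintype.card_equiv (Fintype.equivFinOfCardEq hunits).symm, hunits, Fintype.card_fin]

end

/-- In `F_4^5` there are exactly 135 simplex points and exactly 162 simplex
lines. -/
theorem simplex_counts_F4 (F : Type*) [Field F] [Fintype F] [DecidableEq F]
    (hF : Fintype.card F = 4) :
    Nat.card {P : Submodule F (Fin 5 → F) // SimplexPoint P} = 135 ∧
    Nat.card {L : Submodule F (Fin 5 → F) // SimplexLine L} = 162 := by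
  have hpoints := card_simplexPoint_mul (F := F) (n := 5) (by norm_num)
  rw [hF] at hpoints
  exact ⟨by omega, card_simplexLine (m := 3) hF⟩
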